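/- For an n-simplex T, r ≥ 0, and 0 ≤ k ≤ n, one has the inclusions P_rΛ^k(T) ⊆ P^-_{r+1}Λ^k(T) ⊆ P_{r+1}Λ^k(T) of spaces of polynomial differential forms. -/

import Mathlib

open ExteriorAlgebra

set_option synthInstance.maxHeartbeats 1000000
set_option maxHeartbeats 1000000

noncomputable section

def invSign {m : ℕ} {α : Type*} [LinearOrder α] (f : Fin m → α) : ℤ :=
  (-1 : ℤ) ^ (Finset.univ.filter
    (fun p : Fin m × Fin m => p.1 < p.2 ∧ f p.2 < f p.1)).card

def epsIns {n : ℕ} (q : Fin n) (s : Finset (Fin n)) : ℤ :=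
  (-1 : ℤ) ^ (s.filter (fun x => x < q)).card

def epsApp {n : ℕ} (q : Fin n) (s : Finset (Fin n)) : ℤ :=
  (-1 : ℤ) ^ (s.filter (fun x => q < x)).card

def sortedOfFinset {n : ℕ} (s : Finset (Fin (n + 1))) (m : ℕ) : Fin m → Fin (n + 1) :=
  if h : s.card = m then fun i => (s.orderIsoOfFin h i : Fin (n + 1)) else fun _ => 0

variable {n : ℕ} {E : Type*} [AddCommGroup E] [Module ℝ E]

def dlam (b : AffineBasis (Fin (n + 1)) ℝ E) (i : Fin (n + 1)) : Module.Dual ℝ E :=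
  (b.coord i).linear

def dlamWedge (b : AffineBasis (Fin (n + 1)) ℝ E) {k : ℕ} (σ : Fin k → Fin (n + 1)) :
    ExteriorAlgebra ℝ (Module.Dual ℝ E) :=
  (List.ofFn fun i => ι ℝ (dlam b (σ i))).prod

def lamPow (b : AffineBasis (Fin (n + 1)) ℝ E) (α : Fin (n + 1) → ℕ) (x : E) : ℝ :=
  ∏ i, b.coord i x ^ α i

def whitneyForm (b : AffineBasis (Fin (n + 1)) ℝ E) {m : ℕ} (ρ : Fin m → Fin (n + 1)) (x : E) :
    ExteriorAlgebra ℝ (Module.Dual ℝ E) :=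
  ∑ j : Fin m,
    ((epsIns (ρ j) ((Finset.image ρ Finset.univ).erase (ρ j)) : ℝ) * b.coord (ρ j) x) •
      dlamWedge b (sortedOfFinset ((Finset.image ρ Finset.univ).erase (ρ j)) (m - 1))

section Aux
variable (b : AffineBasis (Fin (n + 1)) ℝ E)

def wprod (l : List (Fin (n + 1))) : ExteriorAlgebra ℝ (Module.Dual ℝ E) :=
  (l.map fun i => ι ℝ (dlam b i)).prod

lemma dlamWedge_eq_wprod {k : ℕ} (σ : Fin k → Fin (n + 1)) :
    dlamWedge b σ = wprod b (List.ofFn σ) := by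
  unfold dlamWedge wprod
  rw [List.map_ofFn]
  rfl

lemma sortedOfFinset_eq {m : ℕ} {s : Finset (Fin (n + 1))} (h : s.card = m) :
    sortedOfFinset s m = fun i => s.orderEmbOfFin h i := by
  unfold sortedOfFinset
  rw [dif_pos h]
  rfl

lemma strictMono_sortedOfFinset {m : ℕ} {s : Finset (Fin (n + 1))} (h : s.card = m) :
    StrictMono (sortedOfFinset s m) := by
  rw [sortedOfFinset_eq h]
  exact (s.orderEmbOfFin h).strictMono

lemma image_sortedOfFinset {m : ℕ} {s : Finset (Fin (n + 1))} (h : s.card = m) :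
    Finset.image (sortedOfFinset s m) Finset.univ = s := by
  rw [sortedOfFinset_eq h]
  apply Finset.coe_injective
  rw [Finset.coe_image, Finset.coe_univ, Set.image_univ]
  exact Finset.range_orderEmbOfFin s h

lemma sortedOfFinset_image {k : ℕ} {σ : Fin k → Fin (n + 1)} (hσ : StrictMono σ) :
    sortedOfFinset (Finset.image σ Finset.univ) k = σ := by
  have hc : (Finset.image σ Finset.univ).card = k := by
    rw [Finset.card_image_of_injective _ hσ.injective, Finset.card_univ, Fintype.card_fin]
  rw [sortedOfFinset_eq hc]
  exact (Finset.orderEmbOfFin_unique hc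
    (fun x => Finset.mem_image_of_mem σ (Finset.mem_univ x)) hσ).symm

lemma ofFn_sortedOfFinset {m : ℕ} {s : Finset (Fin (n + 1))} (h : s.card = m) :
    List.ofFn (sortedOfFinset s m) = s.sort (· ≤ ·) := by
  rw [sortedOfFinset_eq h]
  apply List.ext_getElem
  · simp [Finset.length_sort, h]
  · intro i h1 h2
    simp only [List.getElem_ofFn]
    exact Finset.orderEmbOfFin_apply s h _

end Aux
section Aux2
variable (b : AffineBasis (Fin (n + 1)) ℝ E)

lemma ι_mul_wprod_of_mem {l : List (Fin (n + 1))} {q : Fin (n + 1)} (h : q ∈ l) :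
    ι ℝ (dlam b q) * wprod b l = 0 := by
  induction l with
  | nil => simp at h
  | cons a l ih =>
    rw [wprod, List.map_cons, List.prod_cons, ← mul_assoc]
    rcases List.mem_cons.1 h with rfl | h
    · rw [ι_sq_zero, zero_mul]
    · have hsw : ι ℝ (dlam b q) * ι ℝ (dlam b a) = -(ι ℝ (dlam b a) * ι ℝ (dlam b q)) :=
        eq_neg_of_add_eq_zero_left (by rw [add_comm]; exact ι_add_mul_swap _ _)
      rw [hsw, neg_mul, mul_assoc]
      rw [show ((l.map fun i => ι ℝ (dlam b i)).prod) = wprod b l from rfl]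
      rw [ih h, mul_zero, neg_zero]

lemma ι_mul_wprod_sorted {l : List (Fin (n + 1))} {q : Fin (n + 1)}
    (hs : l.Pairwise (· < ·)) (h : q ∉ l) :
    ι ℝ (dlam b q) * wprod b l =
      ((-1 : ℝ) ^ (l.countP (fun x => decide (x < q)))) •
        wprod b (l.orderedInsert (· ≤ ·) q) := by
  induction l with
  | nil => simp [wprod, List.orderedInsert]
  | cons a l ih =>
    by_cases hq : q ≤ a
    · have hqa : q < a := lt_of_le_of_ne hq (by rintro rfl; exact h List.mem_cons_self)
      rw [List.orderedInsert, if_pos hq]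
      have hcount : (a :: l).countP (fun x => decide (x < q)) = 0 := by
        rw [List.countP_eq_zero]
        intro x hx
        rcases List.mem_cons.1 hx with rfl | hx
        · simp [not_lt.2 hqa.le]
        · have : a < x := (List.pairwise_cons.1 hs).1 x hx
          simp [not_lt.2 (hqa.trans this).le]
      rw [hcount, pow_zero, one_smul, wprod, List.map_cons, List.prod_cons]
      rfl
    · push_neg at hq
      rw [List.orderedInsert, if_neg (not_le.2 hq)]
      have hcount : (a :: l).countP (fun x => decide (x < q)) =
          l.countP (fun x => decide (x < q)) + 1 := by
        rw [List.countP_cons, if_pos (by simpa using hq)]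
      have hsw : ι ℝ (dlam b q) * ι ℝ (dlam b a) = -(ι ℝ (dlam b a) * ι ℝ (dlam b q)) :=
        eq_neg_of_add_eq_zero_left (by rw [add_comm]; exact ι_add_mul_swap _ _)
      have hql : q ∉ l := fun hl => h (List.mem_cons_of_mem _ hl)
      rw [wprod, List.map_cons, List.prod_cons, ← mul_assoc, hsw, neg_mul, mul_assoc]
      rw [show ((l.map fun i => ι ℝ (dlam b i)).prod) = wprod b l from rfl]
      rw [ih (List.pairwise_cons.1 hs).2 hql, hcount, pow_succ]
      rw [show wprod b (a :: l.orderedInsert (· ≤ ·) q) =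
        ι ℝ (dlam b a) * wprod b (l.orderedInsert (· ≤ ·) q) from by
          rw [wprod, List.map_cons, List.prod_cons]; rfl]
      rw [mul_smul_comm, mul_neg_one, neg_smul]

lemma sort_insert' {q : Fin (n + 1)} {t : Finset (Fin (n + 1))} (h : q ∉ t) :
    (insert q t).sort (· ≤ ·) = (t.sort (· ≤ ·)).orderedInsert (· ≤ ·) q := by
  refine List.Perm.eq_of_pairwise' (Finset.pairwise_sort _ _)
    ((Finset.pairwise_sort _ _).orderedInsert q _) ?_
  refine ((Finset.sort_perm_toList _ _).trans ?_).trans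
    (List.perm_orderedInsert _ _ _).symm
  rw [← Multiset.coe_eq_coe, Finset.coe_toList]
  rw [Finset.insert_val_of_notMem h]
  rw [show ((q :: t.sort (· ≤ ·) : List (Fin (n+1))) : Multiset (Fin (n+1)))
      = q ::ₘ (t.sort (· ≤ ·) : List (Fin (n+1))) from rfl]
  rw [Finset.sort_eq]

end Aux2
section Aux3
variable (b : AffineBasis (Fin (n + 1)) ℝ E)

lemma sum_dlam : ∑ i, dlam b i = 0 := by
  apply LinearMap.ext
  intro v
  have h1 : ∑ i, b.coord i (v +ᵥ (0 : E)) = 1 := b.sum_coord_apply_eq_one _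
  have h0 : ∑ i, b.coord i (0 : E) = 1 := b.sum_coord_apply_eq_one _
  have h2 : ∀ i, b.coord i (v +ᵥ (0 : E)) = dlam b i v + b.coord i (0 : E) := fun i =>
    (b.coord i).map_vadd _ _
  simp only [h2, Finset.sum_add_distrib, h0] at h1
  simpa using h1

lemma countP_sort_eq {s : Finset (Fin (n + 1))} {q : Fin (n + 1)} :
    (s.sort (· ≤ ·)).countP (fun x => decide (x < q)) = (s.filter (fun x => x < q)).card := by
  rw [← Multiset.coe_countP, Finset.sort_eq, Multiset.countP_eq_card_filter]
  rfl


lemma ι_mul_W {t : Finset (Fin (n + 1))} {m : ℕ} (hm : t.card = m) {q : Fin (n + 1)}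
    (hq : q ∉ t) :
    ι ℝ (dlam b q) * dlamWedge b (sortedOfFinset t m) =
      (epsIns q t : ℝ) • dlamWedge b (sortedOfFinset (insert q t) (m + 1)) := by
  have hc : (insert q t).card = m + 1 := by rw [Finset.card_insert_of_notMem hq, hm]
  rw [dlamWedge_eq_wprod, dlamWedge_eq_wprod, ofFn_sortedOfFinset hm, ofFn_sortedOfFinset hc,
    sort_insert' hq,
    ι_mul_wprod_sorted b (Finset.sortedLT_sort t).pairwise (fun hmem => hq ((Finset.mem_sort _).1 hmem)),
    countP_sort_eq]
  congr 1
  unfold epsIns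
  push_cast
  rfl

lemma mem_ofFn_sorted {t : Finset (Fin (n + 1))} {m : ℕ} (hm : t.card = m) {q : Fin (n + 1)}
    (hq : q ∈ t) : q ∈ List.ofFn (sortedOfFinset t m) := by
  rw [ofFn_sortedOfFinset hm]
  exact (Finset.mem_sort _).2 hq

lemma sum_eps_W {t : Finset (Fin (n + 1))} {m : ℕ} (hm : t.card = m) :
    ∑ q ∈ tᶜ, (epsIns q t : ℝ) • dlamWedge b (sortedOfFinset (insert q t) (m + 1)) = 0 := by
  have h1 : ∀ q ∈ tᶜ, (epsIns q t : ℝ) • dlamWedge b (sortedOfFinset (insert q t) (m + 1)) =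
      ι ℝ (dlam b q) * dlamWedge b (sortedOfFinset t m) := by
    intro q hq
    exact (ι_mul_W b hm (Finset.mem_compl.1 hq)).symm
  rw [Finset.sum_congr rfl h1, ← Finset.sum_mul, ← map_sum]
  have h2 : ∑ q ∈ tᶜ, dlam b q = -∑ q ∈ t, dlam b q := by
    have h3 := sum_dlam b
    rw [← Finset.sum_add_sum_compl t] at h3
    exact eq_neg_of_add_eq_zero_right h3
  rw [h2, map_neg, neg_mul, map_sum, Finset.sum_mul, neg_eq_zero]
  apply Finset.sum_eq_zero
  intro q hq
  rw [dlamWedge_eq_wprod]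
  exact ι_mul_wprod_of_mem b (mem_ofFn_sorted hm hq)

end Aux3
section Aux4
variable (b : AffineBasis (Fin (n + 1)) ℝ E)

lemma eps_sq (p : Fin (n + 1)) (t : Finset (Fin (n + 1))) :
    (epsIns p t : ℝ) * (epsIns p t : ℝ) = 1 := by
  unfold epsIns
  push_cast
  rw [← pow_add]
  exact Even.neg_one_pow ⟨_, rfl⟩

lemma eps_cross {p q : Fin (n + 1)} {s : Finset (Fin (n + 1))} (hp : p ∈ s) (hq : q ∉ s) :
    (epsIns q s : ℝ) * (epsIns p (insert q (s.erase p)) : ℝ) =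
      -((epsIns p (s.erase p) : ℝ) * (epsIns q (s.erase p) : ℝ)) := by
  have hpq : p ≠ q := fun h => hq (h ▸ hp)
  have hpt : p ∉ s.erase p := Finset.notMem_erase _ _
  have hqt : q ∉ s.erase p := fun h => hq (Finset.mem_of_mem_erase h)
  have hs : s = insert p (s.erase p) := (Finset.insert_erase hp).symm
  unfold epsIns
  rw [show (Finset.filter (fun x => x < q) s) =
      Finset.filter (fun x => x < q) (insert p (s.erase p)) from by rw [← hs]]
  rw [Finset.filter_insert, Finset.filter_insert]
  rcases hpq.lt_or_gt with hlt | hlt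
  · rw [if_pos hlt, if_neg (not_lt.2 hlt.le),
      Finset.card_insert_of_notMem (fun hmem => hpt (Finset.mem_of_mem_filter _ hmem))]
    push_cast [pow_succ]
    ring
  · rw [if_neg (not_lt.2 hlt.le), if_pos hlt,
      Finset.card_insert_of_notMem (fun hmem => hqt (Finset.mem_of_mem_filter _ hmem))]
    push_cast [pow_succ]
    ring

lemma whitneyForm_eq_sum {m : ℕ} {ρ : Fin m → Fin (n + 1)} (hρ : StrictMono ρ) (x : E) :
    whitneyForm b ρ x = ∑ p ∈ Finset.image ρ Finset.univ,
      ((epsIns p ((Finset.image ρ Finset.univ).erase p) : ℝ) * b.coord p x) •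
        dlamWedge b (sortedOfFinset ((Finset.image ρ Finset.univ).erase p) (m - 1)) := by
  rw [whitneyForm, Finset.sum_image (fun a _ c _ h => hρ.injective h)]

end Aux4
section Aux5
variable (b : AffineBasis (Fin (n + 1)) ℝ E)

lemma dlamWedge_eq_sum_whitney {k : ℕ} {σ : Fin k → Fin (n + 1)} (hσ : StrictMono σ) (x : E) :
    dlamWedge b σ = ∑ q ∈ (Finset.image σ Finset.univ)ᶜ,
      (epsIns q (Finset.image σ Finset.univ) : ℝ) •
        whitneyForm b (sortedOfFinset (insert q (Finset.image σ Finset.univ)) (k + 1)) x := by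
  set s := Finset.image σ Finset.univ with hsdef
  have hcs : s.card = k := by
    rw [hsdef, Finset.card_image_of_injective _ hσ.injective, Finset.card_univ,
      Fintype.card_fin]
  have hσs : sortedOfFinset s k = σ := sortedOfFinset_image hσ
  have main : ∀ q ∈ sᶜ, (epsIns q s : ℝ) •
      whitneyForm b (sortedOfFinset (insert q s) (k + 1)) x =
      b.coord q x • dlamWedge b σ +
        ∑ p ∈ s, ((epsIns q s : ℝ) *
          ((epsIns p ((insert q s).erase p) : ℝ) * b.coord p x)) •
            dlamWedge b (sortedOfFinset ((insert q s).erase p) k) := by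
    intro q hq
    have hqs : q ∉ s := Finset.mem_compl.1 hq
    have hc : (insert q s).card = k + 1 := by
      rw [Finset.card_insert_of_notMem hqs, hcs]
    have hexp := whitneyForm_eq_sum b (strictMono_sortedOfFinset hc) x
    rw [image_sortedOfFinset hc] at hexp
    simp only [Nat.succ_sub_one] at hexp
    rw [hexp, Finset.smul_sum, Finset.sum_insert hqs]
    congr 1
    · rw [Finset.erase_insert hqs, hσs, smul_smul, ← mul_assoc, eps_sq, one_mul]
    · exact Finset.sum_congr rfl fun p _ => by rw [smul_smul]
  rw [Finset.sum_congr rfl main, Finset.sum_add_distrib]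
  have inner : ∀ p ∈ s, ∑ q ∈ sᶜ, ((epsIns q s : ℝ) *
      ((epsIns p ((insert q s).erase p) : ℝ) * b.coord p x)) •
        dlamWedge b (sortedOfFinset ((insert q s).erase p) k) =
      b.coord p x • dlamWedge b σ := by
    intro p hp
    obtain ⟨m, rfl⟩ : ∃ m, k = m + 1 :=
      ⟨k - 1, (Nat.succ_pred_eq_of_pos (hcs ▸ Finset.card_pos.2 ⟨p, hp⟩)).symm⟩
    have hm : (s.erase p).card = m := by
      rw [Finset.card_erase_of_mem hp, hcs]
      rfl
    have step : ∀ q ∈ sᶜ, ((epsIns q s : ℝ) *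
        ((epsIns p ((insert q s).erase p) : ℝ) * b.coord p x)) •
          dlamWedge b (sortedOfFinset ((insert q s).erase p) (m + 1)) =
        (-((epsIns p (s.erase p) : ℝ) * b.coord p x)) •
          ((epsIns q (s.erase p) : ℝ) •
            dlamWedge b (sortedOfFinset (insert q (s.erase p)) (m + 1))) := by
      intro q hq
      have hqs : q ∉ s := Finset.mem_compl.1 hq
      have hqp : q ≠ p := fun h => hqs (h ▸ hp)
      rw [Finset.erase_insert_of_ne hqp, smul_smul]
      congr 1
      rw [← mul_assoc, eps_cross hp hqs]
      ring
    rw [Finset.sum_congr rfl step, ← Finset.smul_sum]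
    have hzero := sum_eps_W b hm
    rw [Finset.compl_erase, Finset.sum_insert (fun h => (Finset.mem_compl.1 h) hp),
      Finset.insert_erase hp] at hzero
    have hsum := eq_neg_of_add_eq_zero_right hzero
    rw [hsum, hσs, ← neg_smul, smul_smul]
    congr 1
    have h2 := eps_sq p (s.erase p)
    linear_combination (b.coord p x) * h2
  rw [Finset.sum_comm]
  rw [Finset.sum_congr rfl inner]
  rw [← Finset.sum_smul, ← Finset.sum_smul, ← add_smul,
    Finset.sum_compl_add_sum, b.sum_coord_apply_eq_one, one_smul]

end Aux5
lemma lamPow_add_single (b : AffineBasis (Fin (n + 1)) ℝ E) (α : Fin (n + 1) → ℕ)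
    (j : Fin (n + 1)) (x : E) :
    lamPow b (α + Pi.single j 1) x = lamPow b α x * b.coord j x := by
  unfold lamPow
  simp only [Pi.add_apply, pow_add, Finset.prod_mul_distrib]
  congr 1
  rw [Finset.prod_eq_single j (fun i _ hij => by simp [Pi.single_eq_of_ne hij])
    (fun h => absurd (Finset.mem_univ j) h)]
  simp

/-- For an `n`-simplex `T`, `r ≥ 0` and `0 ≤ k ≤ n`, one has the inclusions
`P_rΛ^k(T) ⊆ P^-_{r+1}Λ^k(T) ⊆ P_{r+1}Λ^k(T)`, where
`P_rΛ^k(T) = span{ λ^α dλ_σ : α ∈ A(r,n), σ ∈ Σ(k,n) }` and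
`P^-_{r+1}Λ^k(T) = span{ λ^α φ_ρ : α ∈ A(r,n), ρ ∈ Σ_0(k,n) }`. -/
theorem inclusions_P_Pminus {n : ℕ} {E : Type*} [AddCommGroup E] [Module ℝ E]
    (b : AffineBasis (Fin (n + 1)) ℝ E) (r k : ℕ) (hk : k ≤ n) :
    Submodule.span ℝ
        {f : E → ExteriorAlgebra ℝ (Module.Dual ℝ E) |
          ∃ α : Fin (n + 1) → ℕ, ∃ σ : Fin k → Fin (n + 1),
            (∑ i, α i) = r ∧ StrictMono σ ∧ f = fun x => lamPow b α x • dlamWedge b σ} ≤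
      Submodule.span ℝ
        {f : E → ExteriorAlgebra ℝ (Module.Dual ℝ E) |
          ∃ α : Fin (n + 1) → ℕ, ∃ ρ : Fin (k + 1) → Fin (n + 1),
            (∑ i, α i) = r ∧ StrictMono ρ ∧ f = fun x => lamPow b α x • whitneyForm b ρ x} ∧
    Submodule.span ℝ
        {f : E → ExteriorAlgebra ℝ (Module.Dual ℝ E) |
          ∃ α : Fin (n + 1) → ℕ, ∃ ρ : Fin (k + 1) → Fin (n + 1),
            (∑ i, α i) = r ∧ StrictMono ρ ∧ f = fun x => lamPow b α x • whitneyForm b ρ x} ≤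
      Submodule.span ℝ
        {f : E → ExteriorAlgebra ℝ (Module.Dual ℝ E) |
          ∃ α : Fin (n + 1) → ℕ, ∃ σ : Fin k → Fin (n + 1),
            (∑ i, α i) = r + 1 ∧ StrictMono σ ∧ f = fun x => lamPow b α x • dlamWedge b σ} := by
  constructor
  · rw [Submodule.span_le]
    rintro f ⟨α, σ, hα, hσ, rfl⟩
    have key : (fun x => lamPow b α x • dlamWedge b σ) =
        ∑ q ∈ (Finset.image σ Finset.univ)ᶜ,
          (epsIns q (Finset.image σ Finset.univ) : ℝ) •
            (fun x => lamPow b α x • whitneyForm b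
              (sortedOfFinset (insert q (Finset.image σ Finset.univ)) (k + 1)) x) := by
      funext x
      rw [Finset.sum_apply, dlamWedge_eq_sum_whitney b hσ x, Finset.smul_sum]
      exact Finset.sum_congr rfl fun q _ => by
        simp only [Pi.smul_apply]
        rw [smul_comm]
    rw [SetLike.mem_coe, key]
    refine Submodule.sum_mem _ fun q hq => Submodule.smul_mem _ _ (Submodule.subset_span ?_)
    refine ⟨α, sortedOfFinset (insert q (Finset.image σ Finset.univ)) (k + 1), hα, ?_, rfl⟩
    apply strictMono_sortedOfFinset
    rw [Finset.card_insert_of_notMem (Finset.mem_compl.1 hq),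
      Finset.card_image_of_injective _ hσ.injective, Finset.card_univ, Fintype.card_fin]
  · rw [Submodule.span_le]
    rintro f ⟨α, ρ, hα, hρ, rfl⟩
    have hcs : (Finset.image ρ Finset.univ).card = k + 1 := by
      rw [Finset.card_image_of_injective _ hρ.injective, Finset.card_univ, Fintype.card_fin]
    have key : (fun x => lamPow b α x • whitneyForm b ρ x) =
        ∑ j : Fin (k + 1),
          ((epsIns (ρ j) ((Finset.image ρ Finset.univ).erase (ρ j)) : ℝ)) •
            (fun x => lamPow b (α + Pi.single (ρ j) 1) x •
              dlamWedge b (sortedOfFinset ((Finset.image ρ Finset.univ).erase (ρ j)) k)) := by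
      funext x
      rw [Finset.sum_apply]
      unfold whitneyForm
      simp only [Nat.succ_sub_one]
      rw [Finset.smul_sum]
      refine Finset.sum_congr rfl fun j _ => ?_
      simp only [Pi.smul_apply]
      rw [lamPow_add_single, smul_smul, smul_smul]
      congr 1
      ring
    rw [SetLike.mem_coe, key]
    refine Submodule.sum_mem _ fun j _ => Submodule.smul_mem _ _ (Submodule.subset_span ?_)
    refine ⟨α + Pi.single (ρ j) 1,
      sortedOfFinset ((Finset.image ρ Finset.univ).erase (ρ j)) k, ?_, ?_, rfl⟩
    · simp only [Pi.add_apply, Finset.sum_add_distrib, hα, Pi.single_apply,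
        Finset.sum_ite_eq', Finset.mem_univ, if_pos]
    · apply strictMono_sortedOfFinset
      rw [Finset.card_erase_of_mem (Finset.mem_image_of_mem ρ (Finset.mem_univ j)), hcs]
      rfl
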